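/- There exist constants δ > 0 and c > 0 such that for every sufficiently large positive integer n, there exists a nonempty subset S ⊆ {0,1}^n such that the uniform distribution D on S satisfies TV(X, D) ≥ 1 − 2^{−cn} for every 𝔽₂-polynomial source X on {0,1}^n of degree at most δn (with any number of input variables). -/

import Mathlib

open Finset

/-- The uniform distribution on a finite type. -/
noncomputable def unif (α : Type*) [Fintype α] : α → ℝ := fun _ => (Fintype.card α : ℝ)⁻¹

/-- `p` is a probability distribution on the finite type `α`. -/
def IsDist {α : Type*} [Fintype α] (p : α → ℝ) : Prop :=
  (∀ a, 0 ≤ p a) ∧ ∑ a, p a = 1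

open scoped Classical in
/-- Probability that a sample from `p` lands in the event `E`. -/
noncomputable def prob {α : Type*} [Fintype α] (p : α → ℝ) (E : Set α) : ℝ :=
  ∑ a, if a ∈ E then p a else 0

/-- Total variation distance between two distributions on a finite type. -/
noncomputable def tv {α : Type*} [Fintype α] (p q : α → ℝ) : ℝ :=
  (∑ a, |p a - q a|) / 2

open scoped Classical in
/-- Pushforward of the distribution `p` under the map `f`. -/
noncomputable def push {α β : Type*} [Fintype α] (f : α → β) (p : α → ℝ) : β → ℝ :=
  fun b => ∑ a, if f a = b then p a else 0

/-- `H∞(p) ≥ k`, i.e. every point has mass at most `2 ^ (-k)`. -/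
def MinEntropyGE {α : Type*} (p : α → ℝ) (k : ℝ) : Prop :=
  ∀ a, p a ≤ (2 : ℝ) ^ (-k)

/-- `(a, b, k)`-isolator for the class `𝒳` of distributions on the finite type `α`:
`Iso` outputs `1` with probability at least `a` on the uniform distribution, and for every
`X ∈ 𝒳`, the probability that a sample of `X` is a light point (mass at most `2^(-k)`)
on which `Iso` outputs `1` is at most `b`. -/
def IsIsolator {α : Type*} [Fintype α] (𝒳 : Set (α → ℝ)) (Iso : α → Bool)
    (a b k : ℝ) : Prop :=
  a ≤ prob (unif α) {x | Iso x = true} ∧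
  ∀ X ∈ 𝒳, prob X {x | X x ≤ (2 : ℝ) ^ (-k) ∧ Iso x = true} ≤ b

/-- `(ε, k)`-extractor (outputting `m` bits) for the class `𝒳`. -/
def IsExtractor {α : Type*} [Fintype α] {m : ℕ} (𝒳 : Set (α → ℝ))
    (Ext : α → Fin m → Bool) (ε k : ℝ) : Prop :=
  ∀ X ∈ 𝒳, MinEntropyGE X k → tv (push Ext X) (unif (Fin m → Bool)) ≤ ε

/-- Identify `Bool` with `𝔽₂`. -/
def b2f (b : Bool) : ZMod 2 := if b then 1 else 0

/-- Degree-`d` polynomial sources on `𝔽₂^n` with exactly `r` input variables: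
pushforwards of the uniform distribution on `𝔽₂^r` under an `n`-tuple of
`𝔽₂`-polynomials of total degree at most `d`. -/
def polySourceExact (d r n : ℕ) : Set ((Fin n → Bool) → ℝ) :=
  {X | ∃ P : Fin n → MvPolynomial (Fin r) (ZMod 2),
    (∀ i, (P i).totalDegree ≤ d) ∧
    X = push (fun u i => decide (MvPolynomial.eval (fun j => b2f (u j)) (P i) = 1))
          (unif (Fin r → Bool))}

/-- Degree-`d` polynomial sources on `𝔽₂^n` with any (positive) number of input variables. -/
def polySource (d n : ℕ) : Set ((Fin n → Bool) → ℝ) :=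
  {X | ∃ r : ℕ, 0 < r ∧ X ∈ polySourceExact d r n}

/-!
Precomposing the polynomials of a degree-`d` source with a uniformly random affine map
`𝔽₂^m → 𝔽₂^r` leaves the degree `≤ d`, and since random affine maps form a pairwise independent
family, a second-moment computation shows that some choice moves the output distribution by at
most `2^{-m}` in squared `ℓ²`, hence by at most `2^{(n-m)/2}` in `ℓ¹`. With `m = 3n`, every
source is therefore `2^{-n}`-close to one of the sources `multilinearSource c`: over `𝔽₂` a
polynomial function of degree `≤ d` only depends on the coefficients of its multilinear monomials,
so these form a family of size `2^{nK}` with `K = #{T ⊆ [3n] : |T| ≤ d} = 2^{O(d)}`.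

Each distribution of this family has at most `w` points of mass `> 1/w`. A uniformly random
`s`-subset `S` of `{0,1}^n` contains `t` given points with probability at most `(s/2^n)^t`, so
when `2^{nK} (w s / 2^n)^t < 1` some `S` meets every such heavy set in fewer than `t` points.
The overlap of each member of the family with the uniform distribution on `S` is then at most
`t/s + s/w`. Taking `k = n/20`, `s = 2^{9k}`, `t = 2^{8k}`, `w = 2^{10k}` and `d = n/100` gives
total variation at least `1 - 2^{-n/100}`.
-/

section Distributions

variable {α β : Type*} [Fintype α]

lemma sum_push [Fintype β] (f : α → β) (p : α → ℝ) : ∑ b, push f p b = ∑ a, p a := by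
  classical
  unfold push
  rw [Finset.sum_comm]
  exact Finset.sum_congr rfl fun a _ => by simp

lemma push_nonneg {p : α → ℝ} (hp : ∀ a, 0 ≤ p a) (f : α → β) (b : β) : 0 ≤ push f p b :=
  Finset.sum_nonneg fun a _ => by split_ifs <;> simp [hp]

lemma push_unif_apply [DecidableEq β] (f : α → β) (b : β) :
    push f (unif α) b = (∑ a, if f a = b then (1 : ℝ) else 0) / Fintype.card α := by
  simp only [push, unif, Finset.sum_div]
  refine Finset.sum_congr rfl fun a _ => ?_
  split_ifs <;> simp

lemma sum_unif [Nonempty α] : ∑ a, unif α a = 1 := by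
  simp [unif]

lemma push_unif_comp_equiv {α' : Type*} [Fintype α'] (e : α' ≃ α) (f : α → β) :
    push (f ∘ e) (unif α') = push f (unif α) := by
  classical
  funext b
  simp only [push, unif, Fintype.card_congr e, Function.comp_apply]
  exact e.sum_comp (fun a => if f a = b then ((Fintype.card α : ℝ))⁻¹ else 0)

lemma tv_comm (p q : α → ℝ) : tv p q = tv q p := by
  simp only [tv, abs_sub_comm]

lemma tv_nonneg (p q : α → ℝ) : 0 ≤ tv p q := by
  unfold tv; positivity

lemma tv_triangle (p q r : α → ℝ) : tv p r ≤ tv p q + tv q r := by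
  simp only [tv, ← add_div, ← Finset.sum_add_distrib]
  gcongr with a
  exact abs_sub_le _ _ _

lemma tv_eq_one_sub_sum_min {p q : α → ℝ} (hp : ∑ a, p a = 1) (hq : ∑ a, q a = 1) :
    tv p q = 1 - ∑ a, min (p a) (q a) := by
  have h (a : α) : |p a - q a| = p a + q a - 2 * min (p a) (q a) := by
    rw [abs_sub_comm, ← max_sub_min_eq_abs]; linarith [min_add_max (p a) (q a)]
  simp only [tv, h, Finset.sum_sub_distrib, Finset.sum_add_distrib, ← Finset.mul_sum, hp, hq]
  ring

lemma card_filter_lt_mul_le {Y : α → ℝ} (hY : ∀ x, 0 ≤ Y x) (θ : ℝ) :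
    #{x | θ < Y x} * θ ≤ ∑ x, Y x := by
  rw [← nsmul_eq_mul]
  calc #{x | θ < Y x} • θ ≤ ∑ x with θ < Y x, Y x :=
        Finset.card_nsmul_le_sum _ _ _ fun x hx => (Finset.mem_filter.1 hx).2.le
    _ ≤ ∑ x, Y x := Finset.sum_le_sum_of_subset_of_nonneg (Finset.subset_univ _) fun x _ _ => hY x

variable [DecidableEq α]

noncomputable def unifOn (S : Finset α) : α → ℝ := fun x => if x ∈ S then (#S : ℝ)⁻¹ else 0

lemma sum_unifOn {S : Finset α} (hS : S.Nonempty) : ∑ x, unifOn S x = 1 := by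
  simp [unifOn, hS.card_ne_zero]

lemma sum_min_unifOn_le {Y : α → ℝ} (hY : ∀ x, 0 ≤ Y x) (S W : Finset α) {θ : ℝ} (hθ : 0 ≤ θ)
    (hW : ∀ x ∉ W, Y x ≤ θ) :
    ∑ x, min (Y x) (unifOn S x) ≤ #(S ∩ W) / #S + #S * θ := by
  have hmin (x : α) : min (Y x) (unifOn S x) ≤
      (if x ∈ S ∩ W then (#S : ℝ)⁻¹ else 0) + (if x ∈ S then θ else 0) := by
    by_cases hxS : x ∈ S <;> by_cases hxW : x ∈ W <;>
      simp [unifOn, hxS, hxW, hY x, hθ, hW x]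
  calc ∑ x, min (Y x) (unifOn S x)
      ≤ ∑ x, ((if x ∈ S ∩ W then (#S : ℝ)⁻¹ else 0) + (if x ∈ S then θ else 0)) :=
        Finset.sum_le_sum fun x _ => hmin x
    _ = #(S ∩ W) / #S + #S * θ := by
        rw [Finset.sum_add_distrib, Finset.sum_ite_mem, Finset.sum_ite_mem]
        simp [div_eq_mul_inv]

end Distributions

section PairwiseUniform

variable {Ω V U : Type*} [Fintype Ω] [Fintype U] [DecidableEq U]

structure IsPairwiseUniform (h : Ω → V → U) : Prop where
  card_eq : ∀ v u, #{ω | h ω v = u} * Fintype.card U = Fintype.card Ω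
  card_eq_of_ne : ∀ v v', v ≠ v' → ∀ u u',
    #{ω | h ω v = u ∧ h ω v' = u'} * Fintype.card U ^ 2 = Fintype.card Ω

namespace IsPairwiseUniform

variable {h : Ω → V → U}

lemma sum_comp (hh : IsPairwiseUniform h) (v : V) (g : U → ℝ) :
    ∑ ω, g (h ω v) = Fintype.card Ω * ((∑ u, g u) / Fintype.card U) := by
  rw [← Finset.sum_fiberwise' _ (fun ω => h ω v), Finset.sum_div, Finset.mul_sum]
  refine Finset.sum_congr rfl fun u _ => ?_
  have hU : (Fintype.card U : ℝ) ≠ 0 := by exact_mod_cast (Fintype.card_pos_iff.2 ⟨u⟩).ne'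
  rw [Finset.sum_const, nsmul_eq_mul, ← (by exact_mod_cast hh.card_eq v u :
    (#{ω | h ω v = u} * Fintype.card U : ℝ) = Fintype.card Ω)]
  field_simp

lemma sum_comp_mul_comp (hh : IsPairwiseUniform h) {v v' : V} (hv : v ≠ v') (g : U → ℝ) :
    ∑ ω, g (h ω v) * g (h ω v') = Fintype.card Ω * ((∑ u, g u) / Fintype.card U) ^ 2 := by
  rw [← Finset.sum_fiberwise' _ (fun ω => (h ω v, h ω v')) (fun p => g p.1 * g p.2),
    Fintype.sum_prod_type, div_pow, sq, Finset.sum_mul_sum, Finset.sum_div, Finset.mul_sum]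
  refine Finset.sum_congr rfl fun u _ => ?_
  rw [Finset.sum_div, Finset.mul_sum]
  refine Finset.sum_congr rfl fun u' _ => ?_
  have hU : (Fintype.card U : ℝ) ≠ 0 := by exact_mod_cast (Fintype.card_pos_iff.2 ⟨u⟩).ne'
  simp only [Prod.mk.injEq, Finset.sum_const, nsmul_eq_mul]
  rw [← (by exact_mod_cast hh.card_eq_of_ne v v' hv u u' :
    (#{ω | h ω v = u ∧ h ω v' = u'} * Fintype.card U ^ 2 : ℝ) = Fintype.card Ω)]
  field_simp

lemma sum_sq_sub_le [Fintype V] [Nonempty V] (hh : IsPairwiseUniform h) {g : U → ℝ}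
    (hg₀ : ∀ u, 0 ≤ g u) (hg₁ : ∀ u, g u ≤ 1) :
    ∑ ω, ((∑ v, g (h ω v)) / Fintype.card V - (∑ u, g u) / Fintype.card U) ^ 2
      ≤ Fintype.card Ω / Fintype.card V * ((∑ u, g u) / Fintype.card U) := by
  classical
  set μ := (∑ u, g u) / Fintype.card U with hμ
  set N := (Fintype.card V : ℝ)
  have hμ₀ : 0 ≤ μ := div_nonneg (Finset.sum_nonneg fun u _ => hg₀ u) (Nat.cast_nonneg _)
  have hN : 0 < N := Nat.cast_pos.2 Fintype.card_pos
  have hA : ∑ ω, ∑ v, g (h ω v) = N * (Fintype.card Ω * μ) := by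
    rw [Finset.sum_comm]
    simp only [hh.sum_comp, ← hμ, Finset.sum_const, Finset.card_univ, nsmul_eq_mul, N]
  -- Off the diagonal pairwise uniformity gives exactly `|Ω| μ²`; on it, `g² ≤ g`.
  have hpair (v v' : V) : ∑ ω, g (h ω v) * g (h ω v')
      ≤ Fintype.card Ω * μ ^ 2 + if v = v' then Fintype.card Ω * μ else 0 := by
    by_cases hv : v = v'
    · subst hv
      calc ∑ ω, g (h ω v) * g (h ω v) ≤ ∑ ω, g (h ω v) :=
            Finset.sum_le_sum fun ω _ => mul_le_of_le_one_left (hg₀ _) (hg₁ _)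
        _ ≤ _ := by rw [hh.sum_comp, ← hμ, if_pos rfl]; nlinarith [sq_nonneg μ]
    · rw [hh.sum_comp_mul_comp hv, ← hμ, if_neg hv, add_zero]
  have hA2 : ∑ ω, (∑ v, g (h ω v)) ^ 2
      ≤ N ^ 2 * (Fintype.card Ω * μ ^ 2) + N * (Fintype.card Ω * μ) :=
    calc ∑ ω, (∑ v, g (h ω v)) ^ 2 = ∑ v, ∑ v', ∑ ω, g (h ω v) * g (h ω v') := by
          simp only [sq, Finset.sum_mul_sum]
          rw [Finset.sum_comm]
          exact Finset.sum_congr rfl fun v _ => Finset.sum_comm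
      _ ≤ ∑ v, ∑ v', (Fintype.card Ω * μ ^ 2 + if v = v' then Fintype.card Ω * μ else 0) :=
          Finset.sum_le_sum fun v _ => Finset.sum_le_sum fun v' _ => hpair v v'
      _ = _ := by simp [Finset.sum_add_distrib, N]; ring
  have hexp (ω : Ω) : ((∑ v, g (h ω v)) / N - μ) ^ 2
      = (∑ v, g (h ω v)) ^ 2 / N ^ 2 - 2 * μ / N * ∑ v, g (h ω v) + μ ^ 2 := by
    field_simp; ring
  simp only [hexp, Finset.sum_add_distrib, Finset.sum_sub_distrib, ← Finset.sum_div,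
    ← Finset.mul_sum, hA, Finset.sum_const, Finset.card_univ, nsmul_eq_mul]
  have hS2 : (∑ ω, (∑ v, g (h ω v)) ^ 2) / N ^ 2
      ≤ Fintype.card Ω * μ ^ 2 + Fintype.card Ω / N * μ := by
    rw [div_le_iff₀ (by positivity)]
    refine hA2.trans_eq ?_
    field_simp
  have hmid : 2 * μ / N * (N * (Fintype.card Ω * μ)) = 2 * (Fintype.card Ω * μ ^ 2) := by
    field_simp
  linarith

lemma exists_sum_sq_push_sub_le [Fintype V] [Nonempty V] [Nonempty Ω]
    (hh : IsPairwiseUniform h) {β : Type*} [Fintype β] (f : U → β) :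
    ∃ ω, ∑ b, (push (f ∘ h ω) (unif V) b - push f (unif U) b) ^ 2 ≤ (Fintype.card V : ℝ)⁻¹ := by
  classical
  have : Nonempty U := ⟨h (Classical.arbitrary Ω) (Classical.arbitrary V)⟩
  have hsum : ∑ ω, ∑ b, (push (f ∘ h ω) (unif V) b - push f (unif U) b) ^ 2
      ≤ ∑ _ω : Ω, (Fintype.card V : ℝ)⁻¹ := by
    rw [Finset.sum_comm]
    calc _ ≤ ∑ b, Fintype.card Ω / Fintype.card V * push f (unif U) b :=
          Finset.sum_le_sum fun b _ => by
            simp only [push_unif_apply]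
            exact hh.sum_sq_sub_le (g := fun u => if f u = b then 1 else 0)
              (fun u => by split_ifs <;> norm_num) (fun u => by split_ifs <;> norm_num)
      _ = _ := by
          rw [← Finset.mul_sum, sum_push, sum_unif]
          simp [div_eq_mul_inv]
  obtain ⟨ω, -, hω⟩ := Finset.exists_le_of_sum_le Finset.univ_nonempty hsum
  exact ⟨ω, hω⟩

end IsPairwiseUniform

end PairwiseUniform

open Matrix

lemma AddMonoidHom.card_fiber_mul_card_eq_of_surjective {G H : Type*} [AddGroup G] [Fintype G]
    [AddGroup H] [Fintype H] [DecidableEq H] (φ : G →+ H) (hφ : Function.Surjective φ) (y : H) :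
    #{x | φ x = y} * Fintype.card H = Fintype.card G := by
  calc #{x | φ x = y} * Fintype.card H = ∑ y' : H, #{x | φ x = y'} := by
        rw [Finset.sum_congr rfl fun y' _ =>
            AddMonoidHom.card_fiber_eq_of_mem_range φ (hφ y') (hφ y),
          Finset.sum_const, Finset.card_univ, smul_eq_mul, mul_comm]
    _ = Fintype.card G :=
        (Finset.card_eq_sum_card_fiberwise fun x _ => Finset.mem_univ (φ x)).symm

lemma Matrix.exists_mulVec_eq_of_ne_zero {K ι κ : Type*} [Field K] [Fintype κ] [DecidableEq κ]
    {e : κ → K} (he : e ≠ 0) (z : ι → K) : ∃ M : Matrix ι κ K, M *ᵥ e = z := by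
  obtain ⟨k, hk⟩ := Function.ne_iff.1 he
  refine ⟨Matrix.of fun i j => if j = k then z i / e k else 0, funext fun i => ?_⟩
  simp [mulVec, dotProduct, ite_mul, div_mul_cancel₀ _ hk]

section Affine

variable {K ι κ : Type*} [Field K] [Fintype K] [DecidableEq K] [Fintype ι] [DecidableEq ι]
  [Fintype κ] [DecidableEq κ]

lemma isPairwiseUniform_affine :
    IsPairwiseUniform fun (ω : Matrix ι κ K × (ι → K)) v => ω.1 *ᵥ v + ω.2 := by
  constructor
  · intro v u
    let φ : Matrix ι κ K × (ι → K) →+ (ι → K) :=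
      AddMonoidHom.mk' (fun ω => ω.1 *ᵥ v + ω.2) fun ω ω' => by
        simp only [Prod.fst_add, Prod.snd_add, Matrix.add_mulVec]; abel
    exact φ.card_fiber_mul_card_eq_of_surjective (fun u => ⟨(0, u), by simp [φ]⟩) u
  · intro v v' hv u u'
    let φ : Matrix ι κ K × (ι → K) →+ (ι → K) × (ι → K) :=
      AddMonoidHom.mk' (fun ω => (ω.1 *ᵥ v + ω.2, ω.1 *ᵥ v' + ω.2)) fun ω ω' => by
        simp only [Prod.fst_add, Prod.snd_add, Matrix.add_mulVec, Prod.mk_add_mk]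
        congr 1 <;> abel
    have hφ : Function.Surjective φ := by
      rintro ⟨u, u'⟩
      obtain ⟨M, hM⟩ := Matrix.exists_mulVec_eq_of_ne_zero (sub_ne_zero.2 hv.symm) (u' - u)
      refine ⟨(M, u - M *ᵥ v), ?_⟩
      simp only [φ, AddMonoidHom.mk'_apply, Prod.mk.injEq, add_sub_cancel, true_and]
      rw [Matrix.mulVec_sub] at hM
      rw [← sub_add_cancel (M *ᵥ v') (M *ᵥ v), hM]
      abel
    simpa [φ, Fintype.card_prod, sq] using φ.card_fiber_mul_card_eq_of_surjective hφ (u, u')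

end Affine

open MvPolynomial

section PolynomialMaps

def boolEquivZModTwo : Bool ≃ ZMod 2 where
  toFun := b2f
  invFun z := decide (z = 1)
  left_inv b := by cases b <;> rfl
  right_inv z := by fin_cases z <;> rfl

variable {σ : Type*} {n : ℕ}

noncomputable def polyMap (P : Fin n → MvPolynomial σ (ZMod 2)) (w : σ → ZMod 2) : Fin n → Bool :=
  fun i => decide (eval w (P i) = 1)

lemma exists_eq_push_polyMap {d r : ℕ} {X : (Fin n → Bool) → ℝ} (hX : X ∈ polySourceExact d r n) :
    ∃ P : Fin n → MvPolynomial (Fin r) (ZMod 2), (∀ i, (P i).totalDegree ≤ d) ∧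
      X = push (polyMap P) (unif (Fin r → ZMod 2)) := by
  obtain ⟨P, hP, rfl⟩ := hX
  exact ⟨P, hP,
    push_unif_comp_equiv (Equiv.piCongrRight fun _ : Fin r => boolEquivZModTwo) (polyMap P)⟩

lemma totalDegree_bind₁_le {τ R : Type*} [CommSemiring R] {f : σ → MvPolynomial τ R}
    (hf : ∀ i, (f i).totalDegree ≤ 1) (p : MvPolynomial σ R) :
    (bind₁ f p).totalDegree ≤ p.totalDegree := by
  rw [bind₁, aeval_eq_eval₂Hom, coe_eval₂Hom, eval₂_eq]
  refine (totalDegree_finsetSum _ _).trans (Finset.sup_le fun μ hμ => ?_)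
  calc (algebraMap R (MvPolynomial τ R) (coeff μ p) * ∏ i ∈ μ.support, f i ^ μ i).totalDegree
      ≤ (∏ i ∈ μ.support, f i ^ μ i).totalDegree := by
        grw [totalDegree_mul, algebraMap_eq, totalDegree_C, zero_add]
    _ ≤ ∑ i ∈ μ.support, μ i * (f i).totalDegree :=
        (totalDegree_finsetProd _ _).trans (Finset.sum_le_sum fun i _ => totalDegree_pow _ _)
    _ ≤ ∑ i ∈ μ.support, μ i :=
        Finset.sum_le_sum fun i _ => by simpa using Nat.mul_le_mul_left (μ i) (hf i)
    _ ≤ p.totalDegree := le_totalDegree hμ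

section AffineSubst

variable {ι κ R : Type*} [CommSemiring R] [Fintype κ]

noncomputable def affineSubst (ω : Matrix ι κ R × (ι → R)) (i : ι) : MvPolynomial κ R :=
  ∑ j, C (ω.1 i j) * X j + C (ω.2 i)

lemma eval_affineSubst (ω : Matrix ι κ R × (ι → R)) (v : κ → R) (i : ι) :
    eval v (affineSubst ω i) = (ω.1 *ᵥ v + ω.2) i := by
  simp [affineSubst, mulVec, dotProduct]

lemma totalDegree_affineSubst_le (ω : Matrix ι κ R × (ι → R)) (i : ι) :
    (affineSubst ω i).totalDegree ≤ 1 := by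
  refine (totalDegree_add _ _).trans (max_le ?_ (by simp))
  refine (totalDegree_finsetSum _ _).trans (Finset.sup_le fun j _ => ?_)
  grw [C_mul_X_eq_monomial, totalDegree_monomial_le, Finsupp.sum_single_index rfl]
  exact le_rfl

end AffineSubst

end PolynomialMaps

section Reduction

lemma polyMap_bind₁_affineSubst {σ κ : Type*} [Fintype κ] {n : ℕ}
    (P : Fin n → MvPolynomial σ (ZMod 2)) (ω : Matrix σ κ (ZMod 2) × (σ → ZMod 2)) :
    polyMap (fun i => bind₁ (affineSubst ω) (P i)) = polyMap P ∘ fun v => ω.1 *ᵥ v + ω.2 := by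
  funext v i
  simp only [polyMap, Function.comp_apply]
  congr 2
  exact (eval₂Hom_bind₁ _ _ _ _).trans (congrArg (eval · (P i)) (funext (eval_affineSubst ω v)))

variable {σ : Type*} [Fintype σ] [DecidableEq σ] {n : ℕ}

lemma exists_polyMap_sum_sq_sub_le {d : ℕ} {P : Fin n → MvPolynomial σ (ZMod 2)}
    (hP : ∀ i, (P i).totalDegree ≤ d) (m : ℕ) :
    ∃ Q : Fin n → MvPolynomial (Fin m) (ZMod 2), (∀ i, (Q i).totalDegree ≤ d) ∧
      ∑ x, (push (polyMap Q) (unif (Fin m → ZMod 2)) x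
        - push (polyMap P) (unif (σ → ZMod 2)) x) ^ 2 ≤ ((2 : ℝ) ^ m)⁻¹ := by
  obtain ⟨ω, hω⟩ := (isPairwiseUniform_affine (K := ZMod 2) (ι := σ) (κ := Fin m))
    |>.exists_sum_sq_push_sub_le (polyMap P)
  refine ⟨fun i => bind₁ (affineSubst ω) (P i),
    fun i => (totalDegree_bind₁_le (totalDegree_affineSubst_le ω) _).trans (hP i), ?_⟩
  rw [polyMap_bind₁_affineSubst]
  simpa using hω

end Reduction

lemma exists_eval_eq_sum_prod {σ : Type*} [Fintype σ] {d : ℕ} {p : MvPolynomial σ (ZMod 2)}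
    (hp : p.totalDegree ≤ d) :
    ∃ c : {T : Finset σ // #T ≤ d} → ZMod 2, ∀ x, eval x p = ∑ T, c T * ∏ i ∈ T.1, x i := by
  classical
  have hpow (z : ZMod 2) {e : ℕ} (he : e ≠ 0) : z ^ e = z := by
    fin_cases z; exacts [zero_pow he, one_pow e]
  have hmaps : ∀ μ ∈ p.support, μ.support ∈ ({T | #T ≤ d} : Finset (Finset σ)) := by
    intro μ hμ
    have := Finset.card_nsmul_le_sum μ.support μ 1
      fun i hi => Nat.one_le_iff_ne_zero.2 (Finsupp.mem_support_iff.1 hi)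
    simp only [smul_eq_mul, mul_one] at this
    simpa using this.trans ((le_totalDegree hμ).trans hp)
  refine ⟨fun T => ∑ μ ∈ p.support with μ.support = T.1, coeff μ p, fun x => ?_⟩
  rw [eval_eq, ← Finset.sum_fiberwise_of_maps_to hmaps]
  refine (Finset.sum_congr rfl fun T _ => ?_).trans
    (Finset.sum_subtype _ (by simp) fun T => (∑ μ ∈ p.support with μ.support = T, coeff μ p)
      * ∏ i ∈ T, x i)
  rw [Finset.sum_mul]
  refine Finset.sum_congr rfl fun μ hμ => ?_
  rw [← (Finset.mem_filter.1 hμ).2]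
  exact congrArg _ (Finset.prod_congr rfl fun i hi => hpow _ (Finsupp.mem_support_iff.1 hi))

noncomputable def multilinearSource {d m n : ℕ}
    (c : Fin n → {T : Finset (Fin m) // #T ≤ d} → ZMod 2) :
    (Fin n → Bool) → ℝ :=
  push (fun w i => decide (∑ T, c i T * ∏ j ∈ T.1, w j = 1)) (unif (Fin m → ZMod 2))

lemma exists_sq_tv_multilinearSource_le {d n : ℕ} {X : (Fin n → Bool) → ℝ}
    (hX : X ∈ polySource d n) (m : ℕ) :
    ∃ c : Fin n → {T : Finset (Fin m) // #T ≤ d} → ZMod 2,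
      (2 * tv X (multilinearSource c)) ^ 2 ≤ 2 ^ n / 2 ^ m := by
  obtain ⟨r, -, hX⟩ := hX
  obtain ⟨P, hP, rfl⟩ := exists_eq_push_polyMap hX
  obtain ⟨Q, hQ, hclose⟩ := exists_polyMap_sum_sq_sub_le hP m
  choose c hc using fun i => exists_eval_eq_sum_prod (hQ i)
  refine ⟨c, ?_⟩
  have hY : multilinearSource c = push (polyMap Q) (unif (Fin m → ZMod 2)) := by
    unfold multilinearSource
    congr 1
    funext w i
    rw [polyMap, hc]
  rw [hY, tv_comm]
  calc (2 * tv _ _) ^ 2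
      = (∑ x, |push (polyMap Q) (unif _) x - push (polyMap P) (unif (Fin r → ZMod 2)) x|) ^ 2 := by
        rw [tv]; ring
    _ ≤ #(univ : Finset (Fin n → Bool))
          * ∑ x, |push (polyMap Q) (unif _) x - push (polyMap P) (unif _) x| ^ 2 :=
        sq_sum_le_card_mul_sum_sq
    _ ≤ 2 ^ n * ((2 : ℝ) ^ m)⁻¹ := by
        simp only [sq_abs, Finset.card_univ, Fintype.card_fun, Fintype.card_bool, Fintype.card_fin]
        push_cast
        gcongr
    _ = 2 ^ n / 2 ^ m := (div_eq_mul_inv _ _).symm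

section RandomSubset

lemma Nat.descFactorial_mul_pow_le {s N : ℕ} (hsN : s ≤ N) (t : ℕ) :
    s.descFactorial t * N ^ t ≤ N.descFactorial t * s ^ t := by
  induction t with
  | zero => simp
  | succ t ih =>
    have hstep : (s - t) * N ≤ (N - t) * s := by
      rw [Nat.sub_mul, Nat.sub_mul, mul_comm N s]
      exact Nat.sub_le_sub_left (Nat.mul_le_mul_left t hsN) _
    calc s.descFactorial (t + 1) * N ^ (t + 1) = s.descFactorial t * N ^ t * ((s - t) * N) := by
          rw [Nat.descFactorial_succ, pow_succ]; ring
      _ ≤ N.descFactorial t * s ^ t * ((N - t) * s) := Nat.mul_le_mul ih hstep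
      _ = N.descFactorial (t + 1) * s ^ (t + 1) := by rw [Nat.descFactorial_succ, pow_succ]; ring

lemma Nat.choose_sub_mul_pow_le {t s N : ℕ} (hts : t ≤ s) (hsN : s ≤ N) :
    (N - t).choose (s - t) * N ^ t ≤ N.choose s * s ^ t := by
  refine Nat.le_of_mul_le_mul_right ?_ (Nat.descFactorial_pos.2 (hts.trans hsN))
  calc (N - t).choose (s - t) * N ^ t * N.descFactorial t
      = t.factorial * N ^ t * (N.choose t * (N - t).choose (s - t)) := by
        rw [Nat.descFactorial_eq_factorial_mul_choose]; ring
    _ = N.choose s * (s.descFactorial t * N ^ t) := by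
        rw [← Nat.choose_mul hts, Nat.descFactorial_eq_factorial_mul_choose]; ring
    _ ≤ N.choose s * (N.descFactorial t * s ^ t) :=
        Nat.mul_le_mul_left _ (Nat.descFactorial_mul_pow_le hsN t)
    _ = N.choose s * s ^ t * N.descFactorial t := by ring

variable {α : Type*} [Fintype α] [DecidableEq α]

lemma card_filter_subset_powersetCard_le (T : Finset α) (s : ℕ) :
    #{S ∈ powersetCard s univ | T ⊆ S} ≤ (Fintype.card α - #T).choose (s - #T) := by
  rw [← Finset.card_univ, ← Finset.card_sdiff_of_subset (Finset.subset_univ T),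
    ← Finset.card_powersetCard]
  refine Finset.card_le_card_of_injOn (· \ T) (fun S hS => ?_) (fun S hS S' hS' h => ?_)
  · obtain ⟨hS, hTS⟩ := Finset.mem_filter.1 hS
    simp only [Finset.mem_coe, Finset.mem_powersetCard] at hS ⊢
    exact ⟨Finset.sdiff_subset_sdiff (Finset.subset_univ _) le_rfl,
      by rw [Finset.card_sdiff_of_subset hTS, hS.2]⟩
  · rw [← Finset.sdiff_union_of_subset (Finset.mem_filter.1 hS).2,
      ← Finset.sdiff_union_of_subset (Finset.mem_filter.1 hS').2]
    exact congrArg (· ∪ T) h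

lemma card_filter_le_card_inter_le (W : Finset α) (s t : ℕ) :
    #{S ∈ powersetCard s univ | t ≤ #(S ∩ W)}
      ≤ #W ^ t * (Fintype.card α - t).choose (s - t) := by
  have hsub : {S ∈ powersetCard s (univ : Finset α) | t ≤ #(S ∩ W)}
      ⊆ (powersetCard t W).biUnion fun T => {S ∈ powersetCard s univ | T ⊆ S} := by
    intro S hS
    obtain ⟨hSs, hcard⟩ := Finset.mem_filter.1 hS
    obtain ⟨T, hT, rfl⟩ := Finset.exists_subset_card_eq hcard
    exact Finset.mem_biUnion.2 ⟨T, Finset.mem_powersetCard.2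
      ⟨hT.trans Finset.inter_subset_right, rfl⟩,
      Finset.mem_filter.2 ⟨hSs, hT.trans Finset.inter_subset_left⟩⟩
  calc #{S ∈ powersetCard s univ | t ≤ #(S ∩ W)}
      ≤ ∑ T ∈ powersetCard t W, #{S ∈ powersetCard s univ | T ⊆ S} :=
        (Finset.card_le_card hsub).trans Finset.card_biUnion_le
    _ ≤ ∑ T ∈ powersetCard t W, (Fintype.card α - t).choose (s - t) :=
        Finset.sum_le_sum fun T hT => by
          simpa [(Finset.mem_powersetCard.1 hT).2] using card_filter_subset_powersetCard_le T s
    _ ≤ #W ^ t * (Fintype.card α - t).choose (s - t) := by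
        rw [Finset.sum_const, Finset.card_powersetCard, smul_eq_mul]
        exact Nat.mul_le_mul_right _ (Nat.choose_le_pow _ _)

lemma exists_card_eq_forall_card_inter_lt {C : Type*} [Fintype C] (W : C → Finset α) {s t w : ℕ}
    (hW : ∀ c, #(W c) ≤ w) (hts : t ≤ s) (hs : s ≤ Fintype.card α)
    (h : Fintype.card C * w ^ t * s ^ t < Fintype.card α ^ t) :
    ∃ S : Finset α, #S = s ∧ ∀ c, #(S ∩ W c) < t := by
  set N := Fintype.card α
  set 𝒮 := powersetCard s (univ : Finset α)
  have hbad (c : C) : #{S ∈ 𝒮 | t ≤ #(S ∩ W c)} ≤ w ^ t * (N - t).choose (s - t) :=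
    (card_filter_le_card_inter_le (W c) s t).trans
      (Nat.mul_le_mul_right _ (Nat.pow_le_pow_left (hW c) t))
  have hlt : #((univ : Finset C).biUnion fun c => {S ∈ 𝒮 | t ≤ #(S ∩ W c)}) < #𝒮 := by
    refine Finset.card_biUnion_le.trans_lt ((Finset.sum_le_sum fun c _ => hbad c).trans_lt ?_)
    rw [Finset.sum_const, Finset.card_univ, smul_eq_mul, Finset.card_powersetCard,
      Finset.card_univ]
    refine Nat.lt_of_mul_lt_mul_right (a := N ^ t) ?_
    calc Fintype.card C * (w ^ t * (N - t).choose (s - t)) * N ^ t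
        ≤ Fintype.card C * w ^ t * (N.choose s * s ^ t) := by
          rw [mul_assoc, mul_assoc, mul_assoc]
          exact Nat.mul_le_mul_left _ (Nat.mul_le_mul_left _ (Nat.choose_sub_mul_pow_le hts hs))
      _ < N.choose s * N ^ t := by
          rw [mul_comm (N.choose s), ← mul_assoc, mul_comm _ (N.choose s)]
          exact Nat.mul_lt_mul_of_pos_left h (Nat.choose_pos hs)
  obtain ⟨S, hS𝒮, hSbad⟩ := Finset.exists_mem_notMem_of_card_lt_card hlt
  refine ⟨S, (Finset.mem_powersetCard.1 hS𝒮).2, fun c => ?_⟩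
  by_contra! hc
  exact hSbad (Finset.mem_biUnion.2 ⟨c, Finset.mem_univ _, Finset.mem_filter.2 ⟨hS𝒮, hc⟩⟩)

end RandomSubset

lemma exists_card_eq_forall_one_sub_le_tv {α C : Type*} [Fintype α] [DecidableEq α] [Fintype C]
    {Y : C → α → ℝ} (hY₀ : ∀ c x, 0 ≤ Y c x) (hY₁ : ∀ c, ∑ x, Y c x = 1) {s t w : ℕ}
    (hts : t ≤ s) (hs : s ≤ Fintype.card α) (hw : 0 < w)
    (h : Fintype.card C * w ^ t * s ^ t < Fintype.card α ^ t) :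
    ∃ S : Finset α, #S = s ∧ ∀ c, 1 - t / s - s / w ≤ tv (Y c) (unifOn S) := by
  have hw' : (0 : ℝ) < w := Nat.cast_pos.2 hw
  let W (c : C) : Finset α := {x | (w : ℝ)⁻¹ < Y c x}
  have hW (c : C) : #(W c) ≤ w := by
    have := card_filter_lt_mul_le (hY₀ c) (w : ℝ)⁻¹
    rw [hY₁ c, ← div_eq_mul_inv, div_le_one hw'] at this
    exact_mod_cast this
  obtain ⟨S, hS, hSW⟩ := exists_card_eq_forall_card_inter_lt W hW hts hs h
  refine ⟨S, hS, fun c => ?_⟩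
  have hs₀ : 0 < s := ((hSW c).trans_le hts).trans_le' (Nat.zero_le _)
  have hmin := sum_min_unifOn_le (hY₀ c) S (W c) (inv_nonneg.2 hw'.le)
    fun x hx => by simpa [W] using hx
  have hinter : (#(S ∩ W c) : ℝ) / s ≤ t / s := by gcongr; exact_mod_cast (hSW c).le
  rw [tv_eq_one_sub_sum_min (hY₁ c) (sum_unifOn (Finset.card_pos.1 (hS ▸ hs₀)))]
  rw [hS, ← div_eq_mul_inv] at hmin
  linarith

section Counting

lemma card_subtype_card_le_le_sum_choose (σ : Type*) [Fintype σ] (d : ℕ) :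
    Fintype.card {T : Finset σ // #T ≤ d} ≤ ∑ i ∈ range (d + 1), (Fintype.card σ).choose i := by
  classical
  rw [Fintype.card_subtype]
  calc #{T : Finset σ | #T ≤ d} ≤ #((range (d + 1)).biUnion fun i => powersetCard i univ) :=
        Finset.card_le_card fun T hT => Finset.mem_biUnion.2 ⟨#T,
          Finset.mem_range.2 (Nat.lt_succ_of_le (Finset.mem_filter.1 hT).2),
          Finset.mem_powersetCard.2 ⟨Finset.subset_univ T, rfl⟩⟩
    _ ≤ _ := Finset.card_biUnion_le.trans_eq (by simp)

lemma sum_choose_le_pow_mul_exp (m d : ℕ) {y : ℝ} (hy : 0 < y) (hym : y ≤ m) :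
    ∑ i ∈ range (d + 1), (m.choose i : ℝ) ≤ (m / y) ^ d * Real.exp y := by
  have hmy : 1 ≤ m / y := (one_le_div hy).2 hym
  calc ∑ i ∈ range (d + 1), (m.choose i : ℝ)
      ≤ ∑ i ∈ range (d + 1), (m / y) ^ i * (y ^ i / i.factorial) :=
        Finset.sum_le_sum fun i _ => (Nat.choose_le_pow_div i m).trans_eq (by
          rw [← mul_div_assoc, ← mul_pow, div_mul_cancel₀ _ hy.ne'])
    _ ≤ ∑ i ∈ range (d + 1), (m / y) ^ d * (y ^ i / i.factorial) :=
        Finset.sum_le_sum fun i hi => by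
          gcongr
          exact Nat.lt_succ_iff.1 (Finset.mem_range.1 hi)
    _ ≤ (m / y) ^ d * Real.exp y := by
        rw [← Finset.mul_sum]
        gcongr
        exact Real.sum_le_exp_of_nonneg hy.le _

lemma card_subtype_card_le_le_two_pow {m d : ℕ} (hdm : d + 1 ≤ m) (hm : m ≤ 300 * (d + 1)) :
    Fintype.card {T : Finset (Fin m) // #T ≤ d} ≤ 2 ^ (10 * (d + 1)) := by
  have hy : (0 : ℝ) < d + 1 := by positivity
  have hbound := sum_choose_le_pow_mul_exp m d hy (by exact_mod_cast hdm)
  have hratio : (m : ℝ) / (d + 1) ≤ 300 := by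
    rw [div_le_iff₀ hy]; exact_mod_cast hm
  have hexp : Real.exp (d + 1) ≤ 3 ^ (d + 1) := by
    rw [show (d : ℝ) + 1 = (d + 1 : ℕ) by push_cast; ring, ← Real.exp_one_pow]
    exact pow_le_pow_left₀ (Real.exp_pos 1).le Real.exp_one_lt_three.le _
  have : (Fintype.card {T : Finset (Fin m) // #T ≤ d} : ℝ) ≤ 2 ^ (10 * (d + 1)) := by
    calc (Fintype.card {T : Finset (Fin m) // #T ≤ d} : ℝ)
        ≤ ∑ i ∈ range (d + 1), (m.choose i : ℝ) := by
          simpa using (Nat.cast_le (α := ℝ)).2 (card_subtype_card_le_le_sum_choose (Fin m) d)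
      _ ≤ 300 ^ (d + 1) * 3 ^ (d + 1) := by
          refine hbound.trans (mul_le_mul ?_ hexp (by positivity) (by positivity))
          calc ((m : ℝ) / (d + 1)) ^ d ≤ 300 ^ d := by gcongr
            _ ≤ 300 ^ (d + 1) := pow_le_pow_right₀ (by norm_num) d.le_succ
      _ ≤ 2 ^ (10 * (d + 1)) := by
          rw [← mul_pow, pow_mul]
          exact pow_le_pow_left₀ (by norm_num) (by norm_num) _
  exact_mod_cast this

end Counting

section Numerics

variable {n : ℕ}

lemma card_coeffs_mul_pow_lt (hn : 100 ≤ n) :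
    Fintype.card (Fin n → {T : Finset (Fin (3 * n)) // #T ≤ n / 100} → ZMod 2)
      * (2 ^ (10 * (n / 20))) ^ 2 ^ (8 * (n / 20)) * (2 ^ (9 * (n / 20))) ^ 2 ^ (8 * (n / 20))
      < Fintype.card (Fin n → Bool) ^ 2 ^ (8 * (n / 20)) := by
  set k := n / 20
  set t := 2 ^ (8 * k)
  have hK : Fintype.card {T : Finset (Fin (3 * n)) // #T ≤ n / 100} ≤ 2 ^ (10 * (n / 100 + 1)) :=
    card_subtype_card_le_le_two_pow (by omega) (by omega)
  have hKn : Fintype.card {T : Finset (Fin (3 * n)) // #T ≤ n / 100} * n < k * t :=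
    calc _ ≤ 2 ^ (10 * (n / 100 + 1)) * 2 ^ 6 * k := by
          rw [mul_assoc]; exact Nat.mul_le_mul hK (by omega)
      _ = k * 2 ^ (10 * (n / 100 + 1) + 6) := by ring
      _ < k * t := Nat.mul_lt_mul_of_pos_left
          (Nat.pow_lt_pow_right (by norm_num) (by omega)) (by omega)
  have hnt : 20 * (k * t) ≤ n * t := by
    rw [← mul_assoc]; exact Nat.mul_le_mul_right t (by omega)
  simp only [Fintype.card_fun, ZMod.card, Fintype.card_bool, Fintype.card_fin, ← pow_mul,
    ← pow_add]
  exact Nat.pow_lt_pow_right (by norm_num) (by linarith)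

lemma one_sub_two_rpow_neg_le (hn : 100 ≤ n) :
    1 - (2 : ℝ) ^ (-(1 / 100 * n : ℝ))
      ≤ 1 - ((2 ^ (8 * (n / 20)) : ℕ) : ℝ) / (2 ^ (9 * (n / 20)) : ℕ)
        - ((2 ^ (9 * (n / 20)) : ℕ) : ℝ) / (2 ^ (10 * (n / 20)) : ℕ) - ((2 : ℝ) ^ n)⁻¹ / 2 := by
  set k := n / 20
  set d := n / 100
  have hst : ((2 ^ (8 * k) : ℕ) : ℝ) / (2 ^ (9 * k) : ℕ) = ((2 : ℝ) ^ k)⁻¹ := by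
    push_cast; rw [show 9 * k = 8 * k + k by ring, pow_add]; field_simp
  have hsw : ((2 ^ (9 * k) : ℕ) : ℝ) / (2 ^ (10 * k) : ℕ) = ((2 : ℝ) ^ k)⁻¹ := by
    push_cast; rw [show 10 * k = 9 * k + k by ring, pow_add]; field_simp
  rw [hst, hsw]
  have hd : (2 : ℝ) ^ (-((d + 1 : ℕ) : ℝ)) ≤ (2 : ℝ) ^ (-(1 / 100 * n : ℝ)) := by
    refine Real.rpow_le_rpow_of_exponent_le (by norm_num) (neg_le_neg ?_)
    have : n < 100 * (d + 1) := by omega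
    have : (n : ℝ) < 100 * (d + 1 : ℕ) := by exact_mod_cast this
    linarith
  rw [Real.rpow_neg (by norm_num), Real.rpow_natCast] at hd
  have hk : (2 : ℝ) ^ (d + 3) ≤ 2 ^ k := pow_le_pow_right₀ (by norm_num) (by omega)
  have hn' : (2 : ℝ) ^ (d + 1) ≤ 2 ^ n := pow_le_pow_right₀ (by norm_num) (by omega)
  have h₁ : 2 * ((2 : ℝ) ^ k)⁻¹ ≤ ((2 : ℝ) ^ (d + 1))⁻¹ / 2 :=
    calc 2 * ((2 : ℝ) ^ k)⁻¹ ≤ 2 * ((2 : ℝ) ^ (d + 3))⁻¹ := by gcongr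
      _ = ((2 : ℝ) ^ (d + 1))⁻¹ / 2 := by rw [pow_add, pow_add]; field_simp
  have h₂ : ((2 : ℝ) ^ n)⁻¹ / 2 ≤ ((2 : ℝ) ^ (d + 1))⁻¹ / 2 := by gcongr
  linarith

end Numerics

theorem stmt19 : ∃ δ c : ℝ, 0 < δ ∧ 0 < c ∧
    ∃ n₀ : ℕ, ∀ n : ℕ, n₀ ≤ n →
      ∃ S : Finset (Fin n → Bool), S.Nonempty ∧
        ∀ X ∈ polySource (⌊δ * (n : ℝ)⌋₊) n,
          1 - (2 : ℝ) ^ (-(c * n))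
            ≤ tv X (fun x => if x ∈ S then ((S.card : ℝ))⁻¹ else 0) := by
  refine ⟨1 / 100, 1 / 100, by norm_num, by norm_num, 100, fun n hn => ?_⟩
  have hd : ⌊(1 / 100 : ℝ) * n⌋₊ = n / 100 := by
    rw [one_div_mul_eq_div]; exact_mod_cast Nat.floor_div_eq_div (K := ℝ) n 100
  set k := n / 20
  obtain ⟨S, hS, hfar⟩ := exists_card_eq_forall_one_sub_le_tv
    (Y := multilinearSource (d := n / 100) (m := 3 * n))
    (fun _ _ => push_nonneg (fun _ => by simp [unif]) _ _)
    (fun _ => by rw [multilinearSource, sum_push, sum_unif])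
    (s := 2 ^ (9 * k)) (t := 2 ^ (8 * k)) (w := 2 ^ (10 * k))
    (Nat.pow_le_pow_right two_pos (by omega))
    (by simpa using Nat.pow_le_pow_right two_pos (by omega : 9 * k ≤ n)) (by positivity)
    (card_coeffs_mul_pow_lt hn)
  refine ⟨S, Finset.card_pos.1 (hS ▸ by positivity), fun X hX => ?_⟩
  obtain ⟨c, hc⟩ := exists_sq_tv_multilinearSource_le (hd ▸ hX) (3 * n)
  have hXY : 2 * tv X (multilinearSource c) ≤ ((2 : ℝ) ^ n)⁻¹ := by
    refine (pow_le_pow_iff_left₀ (by linarith [tv_nonneg X (multilinearSource c)])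
      (by positivity) two_ne_zero).1 (hc.trans_eq ?_)
    rw [show 3 * n = n + n + n by ring, pow_add, pow_add]; field_simp
  change _ ≤ tv X (unifOn S)
  linarith [hfar c, one_sub_two_rpow_neg_le hn, tv_triangle (multilinearSource c) X (unifOn S),
    tv_comm X (multilinearSource c)]
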